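/- For every positive integer n, the set T_n of all block transpositions is invariant under the toric map f̄ and under the reverse map g: the image of T_n under f̄ equals T_n, and the image of T_n under g equals T_n. -/

import Mathlib

/-!
Extend `π` to `[0 π]` and read it cyclically on `ℤ/(n+1)`. For `π = σ(i,j,k)` the value `1`
sits at position `c = [0 π]⁻¹(1)`, and `f̄ π (t) = [0 π](t + c) - 1 (mod n + 1)`. If `i ≥ 1`
then `c = 1`, so `f̄` just shifts the cut points: `f̄ σ(i,j,k) = σ(i-1,j-1,k-1)`. If `i = 0`
the blocks wrap around `0` and `f̄ σ(0,j,k) = σ(j-1,k-1,n)`. These two rules are inverted by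
`σ(i,j,k) ↦ σ(i+1,j+1,k+1)` for `k < n` and `σ(i,j,n) ↦ σ(0,i+1,j+1)`, so `f̄` permutes `T_n`.
The reverse map is an involution with `g σ(i,j,k) = σ(n-k,n-j,n-i)`.
-/


/-- Auxiliary function: the action of the block transposition with cut points
`(i,j,k)` on `{1,…,n}`, written 1-based. -/
def btFun (i j k t : ℕ) : ℕ :=
  if t ≤ i ∨ k < t then t
  else if t ≤ k - j + i then t + j - i
  else t + j - k

theorem btFun_lb {i j k t : ℕ} (h1 : 1 ≤ t) : 1 ≤ btFun i j k t := by
  unfold btFun; split_ifs <;> omega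

theorem btFun_ub {i j k t n : ℕ} (ht : t ≤ n) (hjk : j ≤ k) (hkn : k ≤ n) :
    btFun i j k t ≤ n := by
  unfold btFun; split_ifs <;> omega

theorem btFun_inv {i j k : ℕ} (hij : i < j) (hjk : j < k) (t : ℕ) :
    btFun i (k - j + i) k (btFun i j k t) = t := by
  unfold btFun; split_ifs <;> omega

theorem btFun_inv' {i j k : ℕ} (hij : i < j) (hjk : j < k) (t : ℕ) :
    btFun i j k (btFun i (k - j + i) k t) = t := by
  have h := btFun_inv (i := i) (j := k - j + i) (k := k) (by omega) (by omega) t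
  have e : k - (k - j + i) + i = j := by omega
  rwa [e] at h

/-- The block transposition `σ(i,j,k)` as a permutation of `Fin n`,
where `t : Fin n` encodes the element `t.val + 1` of `{1,…,n}`. -/
def blockT (n i j k : ℕ) (hij : i < j) (hjk : j < k) (hkn : k ≤ n) :
    Equiv.Perm (Fin n) where
  toFun t := ⟨btFun i j k (t.1 + 1) - 1, by
    have h0 := t.isLt
    have h1 := btFun_lb (i := i) (j := j) (k := k) (t := t.1 + 1) (by omega)
    have h2 := btFun_ub (i := i) (j := j) (k := k) (t := t.1 + 1) (n := n)
      (by omega) (by omega) hkn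
    omega⟩
  invFun t := ⟨btFun i (k - j + i) k (t.1 + 1) - 1, by
    have h0 := t.isLt
    have h1 := btFun_lb (i := i) (j := k - j + i) (k := k) (t := t.1 + 1) (by omega)
    have h2 := btFun_ub (i := i) (j := k - j + i) (k := k) (t := t.1 + 1) (n := n)
      (by omega) (by omega) hkn
    omega⟩
  left_inv t := by
    have h1 := btFun_lb (i := i) (j := j) (k := k) (t := t.1 + 1) (by omega)
    have h2 := btFun_inv hij hjk (t.1 + 1)
    apply Fin.ext
    simp only
    have h3 : btFun i j k (t.1 + 1) - 1 + 1 = btFun i j k (t.1 + 1) := by omega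
    rw [h3, h2]
    omega
  right_inv t := by
    have h1 := btFun_lb (i := i) (j := k - j + i) (k := k) (t := t.1 + 1) (by omega)
    have h2 := btFun_inv' hij hjk (t.1 + 1)
    apply Fin.ext
    simp only
    have h3 : btFun i (k - j + i) k (t.1 + 1) - 1 + 1 = btFun i (k - j + i) k (t.1 + 1) := by
      omega
    rw [h3, h2]
    omega

/-- `T_n`: the set of all block transpositions on `{1,…,n}`. -/
def blockTranspositions (n : ℕ) : Set (Equiv.Perm (Fin n)) :=
  {π | ∃ (i j k : ℕ) (hij : i < j) (hjk : j < k) (hkn : k ≤ n),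
      blockT n i j k hij hjk hkn = π}

theorem blockT_inv {n i j k : ℕ} (hij : i < j) (hjk : j < k) (hkn : k ≤ n) :
    (blockT n i j k hij hjk hkn)⁻¹
      = blockT n i (k - j + i) k (by omega) (by omega) hkn :=
  Equiv.ext fun _ => rfl

theorem blockTranspositions_inv_mem {n : ℕ} {π : Equiv.Perm (Fin n)}
    (h : π ∈ blockTranspositions n) : π⁻¹ ∈ blockTranspositions n := by
  obtain ⟨i, j, k, hij, hjk, hkn, rfl⟩ := h
  exact ⟨i, k - j + i, k, by omega, by omega, hkn, (blockT_inv hij hjk hkn).symm⟩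

/-- The Cayley graph `Cay(Sym_n, T_n)`. -/
def cayleyT (n : ℕ) : SimpleGraph (Equiv.Perm (Fin n)) where
  Adj π ρ := π ≠ ρ ∧ π⁻¹ * ρ ∈ blockTranspositions n
  symm := ⟨by
    rintro π ρ ⟨hne, hmem⟩
    refine ⟨hne.symm, ?_⟩
    have h := blockTranspositions_inv_mem hmem
    rwa [mul_inv_rev, inv_inv] at h⟩
  loopless := ⟨fun π h => h.1 rfl⟩

def ext0 {n : ℕ} (π : Equiv.Perm (Fin n)) : Equiv.Perm (Fin (n + 1)) where
  toFun x := Fin.cases 0 (fun t => (π t).succ) x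
  invFun x := Fin.cases 0 (fun t => (π⁻¹ t).succ) x
  left_inv x := by
    cases x using Fin.cases with
    | zero => simp
    | succ t => simp
  right_inv x := by
    cases x using Fin.cases with
    | zero => simp
    | succ t => simp

theorem ext0_zero {n : ℕ} (π : Equiv.Perm (Fin n)) : ext0 π 0 = 0 := by
  simp [ext0]

open Fin.NatCast

theorem finRotate_pow_apply {n : ℕ} (m : ℕ) (x : Fin (n + 1)) :
    ((finRotate (n + 1)) ^ m) x = x + (m : Fin (n + 1)) := by
  induction m with
  | zero => simp
  | succ m ih =>
      rw [pow_succ', Equiv.Perm.mul_apply, finRotate_succ_apply, ih]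
      open Fin.CommRing in (push_cast; ring)

/-- The auxiliary permutation `α^(n+1-r) ∘ [0 π] ∘ α^(π⁻¹(r))` of `{0,1,…,n}`. -/
def toricAux (n r : ℕ) (π : Equiv.Perm (Fin n)) : Equiv.Perm (Fin (n + 1)) :=
  (finRotate (n + 1)) ^ (n + 1 - r) * ext0 π *
    (finRotate (n + 1)) ^ (((ext0 π)⁻¹ (r : Fin (n + 1))) : ℕ)

theorem toricAux_apply_zero (n r : ℕ) (hr : r ≤ n) (π : Equiv.Perm (Fin n)) :
    toricAux n r π 0 = 0 := by
  unfold toricAux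
  have h : r + (n + 1 - r) = n + 1 := by omega
  rw [Equiv.Perm.mul_apply, Equiv.Perm.mul_apply, finRotate_pow_apply,
    finRotate_pow_apply, zero_add, Fin.cast_val_eq_self,
    Equiv.Perm.coe_inv, Equiv.apply_symm_apply, ← Nat.cast_add, h, Fin.natCast_self]

/-- Restriction of a permutation of `{0,1,…,n}` fixing `0` to a permutation of `{1,…,n}`. -/
def unext0 {n : ℕ} (τ : Equiv.Perm (Fin (n + 1))) (h : τ 0 = 0) : Equiv.Perm (Fin n) where
  toFun t := (τ t.succ).pred (by
    intro hc
    exact Fin.succ_ne_zero t (τ.injective (hc.trans h.symm)))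
  invFun t := (τ⁻¹ t.succ).pred (by
    intro hc
    have h' : τ⁻¹ 0 = 0 := by
      conv_lhs => rw [← h]
      exact τ.symm_apply_apply 0
    exact Fin.succ_ne_zero t (τ⁻¹.injective (hc.trans h'.symm)))
  left_inv t := by
    apply Fin.succ_injective
    rw [Fin.succ_pred, Fin.succ_pred, Equiv.Perm.coe_inv, Equiv.symm_apply_apply]
  right_inv t := by
    apply Fin.succ_injective
    rw [Fin.succ_pred, Fin.succ_pred, Equiv.Perm.coe_inv, Equiv.apply_symm_apply]

/-- The toric map `f̄_r` on `Sym_n`. -/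
def toricMap (n r : ℕ) (hr : r ≤ n) (π : Equiv.Perm (Fin n)) : Equiv.Perm (Fin n) :=
  unext0 (toricAux n r π) (toricAux_apply_zero n r hr π)

/-- The reversal `w : t ↦ n+1-t` of `{1,…,n}`, in the `Fin n` encoding. -/
def wrev (n : ℕ) : Equiv.Perm (Fin n) where
  toFun t := ⟨n - 1 - t.val, by have := t.isLt; omega⟩
  invFun t := ⟨n - 1 - t.val, by have := t.isLt; omega⟩
  left_inv t := by
    have := t.isLt
    apply Fin.ext
    simp only
    omega
  right_inv t := by
    have := t.isLt
    apply Fin.ext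
    simp only
    omega

theorem wrev_wrev {n : ℕ} (t : Fin n) : wrev n (wrev n t) = t := by
  have := t.isLt
  apply Fin.ext
  simp only [wrev, Equiv.coe_fn_mk]
  omega

/-- The reverse map `g` on `Sym_n`: `g(π) = w ∘ π ∘ w`,
i.e. `(g π)(t) = n+1-π(n+1-t)` in 1-based notation. -/
def revMap {n : ℕ} (π : Equiv.Perm (Fin n)) : Equiv.Perm (Fin n) :=
  wrev n * π * wrev n

theorem revMap_revMap {n : ℕ} (π : Equiv.Perm (Fin n)) : revMap (revMap π) = π := by
  ext t
  simp only [revMap, Equiv.Perm.mul_apply]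
  rw [wrev_wrev, wrev_wrev]

theorem ext0_inv {n : ℕ} (π : Equiv.Perm (Fin n)) : (ext0 π)⁻¹ = ext0 π⁻¹ := rfl

theorem ext0_apply_succ {n : ℕ} (π : Equiv.Perm (Fin n)) (t : Fin n) :
    ext0 π t.succ = (π t).succ := rfl

theorem btFun_zero (i j k : ℕ) : btFun i j k 0 = 0 := by
  simp [btFun]

theorem val_ext0_blockT {n i j k : ℕ} (hij : i < j) (hjk : j < k) (hkn : k ≤ n)
    (x : Fin (n + 1)) : (ext0 (blockT n i j k hij hjk hkn) x : ℕ) = btFun i j k x := by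
  cases x using Fin.cases with
  | zero => rw [ext0_zero, Fin.val_zero, btFun_zero]
  | succ t =>
    have := btFun_lb (i := i) (j := j) (k := k) (Nat.le_add_left 1 t.val)
    rw [ext0_apply_succ, Fin.val_succ, Fin.val_succ]
    exact Nat.sub_add_cancel this

theorem toricAux_apply (n r : ℕ) (π : Equiv.Perm (Fin n)) (x : Fin (n + 1)) :
    toricAux n r π x = ext0 π (x + (ext0 π)⁻¹ r) + (n + 1 - r : ℕ) := by
  rw [toricAux, Equiv.Perm.mul_apply, Equiv.Perm.mul_apply, finRotate_pow_apply,
    finRotate_pow_apply, Fin.cast_val_eq_self]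

theorem succ_toricMap_apply {n r : ℕ} (hr : r ≤ n) (π : Equiv.Perm (Fin n)) (t : Fin n) :
    (toricMap n r hr π t).succ = ext0 π (t.succ + (ext0 π)⁻¹ r) + (n + 1 - r : ℕ) := by
  rw [← toricAux_apply]
  simp only [toricMap, unext0, Equiv.coe_fn_mk, Fin.succ_pred]

theorem val_toricMap_one_blockT {n i j k : ℕ} (hn : 1 ≤ n) (hij : i < j) (hjk : j < k)
    (hkn : k ≤ n) (t : Fin n) :
    (toricMap n 1 hn (blockT n i j k hij hjk hkn) t : ℕ) + 1 =
      (btFun i j k ((t + 1 + btFun i (k - j + i) k 1) % (n + 1)) + n) % (n + 1) := by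
  rw [← Fin.val_succ, succ_toricMap_apply, ext0_inv, blockT_inv, Fin.val_add,
    val_ext0_blockT, Fin.val_add, val_ext0_blockT]
  simp only [Fin.val_natCast, Fin.val_succ, Nat.add_sub_cancel,
    Nat.mod_eq_of_lt (Nat.lt_succ_self n), Nat.mod_eq_of_lt (Nat.succ_lt_succ hn)]

theorem Nat.mod_eq_self_or_eq_sub {a m : ℕ} (h : a < m + m) :
    a % m = a ∧ a < m ∨ a % m = a - m ∧ m ≤ a := by
  rcases Nat.lt_or_ge a m with ham | ham
  · exact Or.inl ⟨Nat.mod_eq_of_lt ham, ham⟩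
  · exact Or.inr ⟨by rw [Nat.mod_eq_sub_mod ham, Nat.mod_eq_of_lt (by omega)], ham⟩

/-- `H` is the identity `f̄ σ (s) = [0 σ](s + c) - 1 (mod n + 1)` at the point `s = t + 1`,
with `c = [0 σ]⁻¹(1) = btFun i (k - j + i) k 1` and `x` the residue of `s + c`. -/
theorem toricMap_one_blockT_eq {n i j k i' j' k' : ℕ} (hn : 1 ≤ n) (hij : i < j) (hjk : j < k)
    (hkn : k ≤ n) (hij' : i' < j') (hjk' : j' < k') (hkn' : k' ≤ n)
    (H : ∀ t x, t < n → x ≤ n →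
      (x = t + 1 + btFun i (k - j + i) k 1 ∨ x + (n + 1) = t + 1 + btFun i (k - j + i) k 1) →
      (if x = 0 then n else btFun i j k x - 1) = btFun i' j' k' (t + 1)) :
    toricMap n 1 hn (blockT n i j k hij hjk hkn) = blockT n i' j' k' hij' hjk' hkn' := by
  ext t
  have h := val_toricMap_one_blockT hn hij hjk hkn t
  have hc := btFun_ub (i := i) (j := k - j + i) (t := 1) hn (by omega) hkn
  have hlb := btFun_lb (i := i') (j := j') (k := k') (Nat.le_add_left 1 t.val)
  generalize hx : (t.val + 1 + btFun i (k - j + i) k 1) % (n + 1) = x at h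
  have hxn : x ≤ n := hx ▸ Nat.le_of_lt_succ (Nat.mod_lt _ n.succ_pos)
  have hxc := Nat.mod_eq_self_or_eq_sub (a := t.val + 1 + btFun i (k - j + i) k 1) (m := n + 1)
    (by omega)
  have hy := btFun_ub (i := i) (j := j) hxn hjk.le hkn
  have hy0 : btFun i j k x = 0 ↔ x = 0 := by unfold btFun; split_ifs <;> omega
  have key := H t x t.isLt hxn (by omega)
  change _ = btFun i' j' k' (t.val + 1) - 1
  rcases Nat.mod_eq_self_or_eq_sub (a := btFun i j k x + n) (m := n + 1) (by omega)
    with ⟨hz, -⟩ | ⟨hz, -⟩ <;> rw [hz] at h <;> split_ifs at key <;> omega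

theorem toricMap_one_blockT_succ {n i j k : ℕ} (hn : 1 ≤ n) (hij : i < j) (hjk : j < k)
    (hkn : k < n) :
    toricMap n 1 hn (blockT n (i + 1) (j + 1) (k + 1) (by omega) (by omega) hkn) =
      blockT n i j k hij hjk hkn.le :=
  toricMap_one_blockT_eq hn _ _ _ _ _ _ fun _ _ _ _ hxc => by
    unfold btFun at hxc ⊢; split_ifs at hxc ⊢ <;> omega

theorem toricMap_one_blockT_zero {n i j : ℕ} (hn : 1 ≤ n) (hij : i < j) (hjn : j < n) :
    toricMap n 1 hn (blockT n 0 (i + 1) (j + 1) (by omega) (by omega) hjn) =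
      blockT n i j n hij hjn le_rfl :=
  toricMap_one_blockT_eq hn _ _ _ _ _ _ fun _ _ _ _ hxc => by
    unfold btFun at hxc ⊢; split_ifs at hxc ⊢ <;> omega

theorem revMap_blockT {n i j k : ℕ} (hij : i < j) (hjk : j < k) (hkn : k ≤ n) :
    revMap (blockT n i j k hij hjk hkn) =
      blockT n (n - k) (n - j) (n - i) (by omega) (by omega) (by omega) := by
  ext t
  have ht := t.isLt
  simp only [revMap, Equiv.Perm.mul_apply, wrev, blockT, Equiv.coe_fn_mk]
  unfold btFun; split_ifs <;> omega

theorem image_toricMap_one_blockTranspositions {n : ℕ} (hn : 1 ≤ n) :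
    toricMap n 1 hn '' blockTranspositions n = blockTranspositions n := by
  apply Set.Subset.antisymm
  · rintro _ ⟨_, ⟨i, j, k, hij, hjk, hkn, rfl⟩, rfl⟩
    obtain ⟨j, rfl⟩ : ∃ j', j = j' + 1 := ⟨j - 1, by omega⟩
    obtain ⟨k, rfl⟩ : ∃ k', k = k' + 1 := ⟨k - 1, by omega⟩
    rcases i with _ | i
    · exact ⟨j, k, n, by omega, hkn, le_rfl, (toricMap_one_blockT_zero hn _ _).symm⟩
    · exact ⟨i, j, k, by omega, by omega, by omega, (toricMap_one_blockT_succ hn _ _ _).symm⟩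
  · rintro _ ⟨i, j, k, hij, hjk, hkn, rfl⟩
    rcases hkn.lt_or_eq with hkn | rfl
    · exact ⟨_, ⟨i + 1, j + 1, k + 1, by omega, by omega, hkn, rfl⟩,
        toricMap_one_blockT_succ hn hij hjk hkn⟩
    · exact ⟨_, ⟨0, i + 1, j + 1, by omega, by omega, hjk, rfl⟩,
        toricMap_one_blockT_zero hn hij hjk⟩

theorem image_revMap_blockTranspositions (n : ℕ) :
    revMap '' blockTranspositions n = blockTranspositions n := by
  have hsub : revMap '' blockTranspositions n ⊆ blockTranspositions n := by
    rintro _ ⟨_, ⟨i, j, k, hij, hjk, hkn, rfl⟩, rfl⟩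
    exact ⟨_, _, _, _, _, _, (revMap_blockT hij hjk hkn).symm⟩
  exact hsub.antisymm fun π hπ => ⟨revMap π, hsub ⟨π, hπ, rfl⟩, revMap_revMap π⟩

/-- For every positive integer `n`, the set `T_n` is invariant
under the toric map `f̄` and under the reverse map `g`. -/
theorem stmt_6 (n : ℕ) (hn : 1 ≤ n) :
    toricMap n 1 hn '' blockTranspositions n = blockTranspositions n ∧
    revMap '' blockTranspositions n = blockTranspositions n :=
  ⟨image_toricMap_one_blockTranspositions hn, image_revMap_blockTranspositions n⟩
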